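/- For any measurable f : [0,1]^k → [0,1], the set of x ∈ [0,1]^ℕ such that the sequence n ↦ f(x_n, x_{n+1}, …, x_{n+k−1}) is strictly decreasing (i.e. f(x_n,…,x_{n+k−1}) > f(x_{n+1},…,x_{n+k}) for all n ∈ ℕ) has product Lebesgue measure zero. -/

import Mathlib

open MeasureTheory unitInterval ENNReal

namespace Stmt14Aux

/-- Encoding of a triple `(j, b, i)` into a natural number `< 2*k*M`. -/
def enc (k : ℕ) {M : ℕ} (p : Fin M × Bool × Fin k) : ℕ :=
  p.2.2.1 + k * (p.2.1.toNat + 2 * p.1.1)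

lemma enc_lt {k M : ℕ} (p : Fin M × Bool × Fin k) : enc k p < 2 * k * M := by
  obtain ⟨⟨j, hj⟩, b, ⟨i, hi⟩⟩ := p
  have hb : b.toNat ≤ 1 := by cases b <;> simp
  have hM : 1 ≤ M := by omega
  have h1 : b.toNat + 2 * j ≤ 2 * M - 1 := by omega
  have h2 : k * (b.toNat + 2 * j) ≤ k * (2 * M - 1) := Nat.mul_le_mul_left k h1
  have h3 : k * (2 * M - 1) + k = 2 * k * M := by
    calc k * (2 * M - 1) + k = k * ((2 * M - 1) + 1) := (Nat.mul_succ k _).symm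
      _ = k * (2 * M) := by congr 1; omega
      _ = 2 * k * M := by ring
  simp only [enc]
  linarith

lemma enc_injective {k M : ℕ} : Function.Injective (enc k (M := M)) := by
  rintro ⟨⟨j, hj⟩, b, ⟨i, hi⟩⟩ ⟨⟨j', hj'⟩, b', ⟨i', hi'⟩⟩ h
  simp only [enc] at h
  have hk : 0 < k := by omega
  have hi0 : i = i' := by
    have e1 : (i + k * (b.toNat + 2 * j)) % k = i := by
      rw [Nat.add_mul_mod_self_left, Nat.mod_eq_of_lt hi]
    have e2 : (i' + k * (b'.toNat + 2 * j')) % k = i' := by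
      rw [Nat.add_mul_mod_self_left, Nat.mod_eq_of_lt hi']
    rw [← e1, ← e2, h]
  have hq : b.toNat + 2 * j = b'.toNat + 2 * j' := by
    have e1 : (i + k * (b.toNat + 2 * j)) / k = i / k + (b.toNat + 2 * j) :=
      Nat.add_mul_div_left i _ hk
    have e2 : (i' + k * (b'.toNat + 2 * j')) / k = i' / k + (b'.toNat + 2 * j') :=
      Nat.add_mul_div_left i' _ hk
    have key : i / k + (b.toNat + 2 * j) = i' / k + (b'.toNat + 2 * j') := by
      rw [← e1, ← e2, h]
    have hz : i / k = 0 := Nat.div_eq_of_lt hi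
    have hz' : i' / k = 0 := Nat.div_eq_of_lt hi'
    omega
  have hb : b.toNat ≤ 1 := by cases b <;> simp
  have hb' : b'.toNat ≤ 1 := by cases b' <;> simp
  have hbb : b = b' := by
    have : b.toNat = b'.toNat := by omega
    cases b <;> cases b' <;> simp_all
  have hjj : j = j' := by omega
  simp [Prod.ext_iff, Fin.ext_iff, hi0, hbb, hjj]

/-- The bijection between triples and `Finset.range (2*k*M)`. -/
noncomputable def encEquiv (k M : ℕ) :
    (Fin M × Bool × Fin k) ≃ (Finset.range (2 * k * M) : Finset ℕ) :=
  Equiv.ofBijective (fun p => ⟨enc k p, Finset.mem_range.mpr (enc_lt p)⟩)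
    ((Fintype.bijective_iff_injective_and_card _).mpr
      ⟨fun p q h => enc_injective (by simpa using congrArg Subtype.val h),
        by simp [Fintype.card_coe]; ring⟩)

@[simp] lemma encEquiv_apply (k M : ℕ) (p : Fin M × Bool × Fin k) :
    ((encEquiv k M) p : ℕ) = enc k p := rfl

end Stmt14Aux

open Stmt14Aux in
/-- for any measurable `f : [0,1]^k → [0,1]`, the set of sequences
`x ∈ [0,1]^ℕ` such that `n ↦ f(x_n,…,x_{n+k−1})` is strictly decreasing has
product Lebesgue measure zero. -/
theorem stmt_14 (k : ℕ) (hk : 1 ≤ k)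
    (μ : Measure (ℕ → I)) [IsProbabilityMeasure μ]
    (hμ : ∀ t : Finset ℕ,
      Measure.map (fun x (i : t) => x i) μ = Measure.pi fun _ : t => (volume : Measure I))
    (f : (Fin k → I) → I) (hf : Measurable f) :
    μ {x : ℕ → I | ∀ n : ℕ,
        f (fun i => x (n + i.1)) > f (fun i => x (n + 1 + i.1))} = 0 := by
  classical
  set E : Set (ℕ → I) := {x : ℕ → I | ∀ n : ℕ,
      f (fun i => x (n + i.1)) > f (fun i => x (n + 1 + i.1))} with hE
  refine le_antisymm ?_ (zero_le)
  have key : ∀ M : ℕ, μ E ≤ ((2 : ℝ≥0∞)⁻¹) ^ M := by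
    intro M
    set t : Finset ℕ := Finset.range (2 * k * M) with ht
    set e : (Fin M × Bool × Fin k) ≃ t := encEquiv k M with he
    set r : (ℕ → I) → (Fin M × Bool × Fin k → I) := fun x p => x (enc k p) with hr
    have hrm : Measurable r := measurable_pi_lambda _ fun p => measurable_pi_apply _
    set ρ : Measure (Fin M × Bool × Fin k → I) :=
      Measure.pi (fun _ => (volume : Measure I)) with hρ
    -- the pushforward of μ under r is the product measure ρ
    have hmap : Measure.map r μ = ρ := by
      have hres : Measurable (fun (x : ℕ → I) (i : t) => x (i : ℕ)) :=
        measurable_pi_lambda _ fun i => measurable_pi_apply _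
      have hmp : MeasurePreserving
          (MeasurableEquiv.piCongrLeft (fun _ : t => I) e)
          ρ (Measure.pi fun _ : t => (volume : Measure I)) :=
        measurePreserving_piCongrLeft (fun _ : t => (volume : Measure I)) e
      have hcomp : r =
          (MeasurableEquiv.piCongrLeft (fun _ : t => I) e).symm ∘
            (fun x (i : t) => x (i : ℕ)) := by
        funext x p
        simp only [r, he, Function.comp_apply, MeasurableEquiv.piCongrLeft,
          MeasurableEquiv.coe_mk, Equiv.piCongrLeft_symm_apply]
        rfl
      rw [hcomp, ← Measure.map_map (MeasurableEquiv.piCongrLeft (fun _ : t => I) e).symm.measurable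
        hres, hμ t, (MeasurePreserving.symm _ hmp).map_eq]
    -- the family of events
    set T : (Fin M → Bool) → Set (Fin M × Bool × Fin k → I) := fun ε =>
      {y | ∀ j : Fin M, f (fun i => y (j, !(ε j), i)) < f (fun i => y (j, ε j, i))} with hT
    have hTm : ∀ ε, MeasurableSet (T ε) := by
      intro ε
      have : T ε = ⋂ j : Fin M,
          {y | f (fun i => y (j, !(ε j), i)) < f (fun i => y (j, ε j, i))} := by
        ext y; simp [T, Set.mem_iInter]
      rw [this]
      refine MeasurableSet.iInter fun j => measurableSet_lt ?_ ?_ <;>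
        exact hf.comp (measurable_pi_lambda _ fun i => measurable_pi_apply _)
    -- all T ε have the same measure
    have hTmeas : ∀ ε, ρ (T ε) = ρ (T fun _ => false) := by
      intro ε
      have hinv : Function.Involutive
          (fun p : Fin M × Bool × Fin k => (p.1, xor (ε p.1) p.2.1, p.2.2)) := by
        rintro ⟨j, b, i⟩; cases h : ε j <;> cases b <;> simp [h]
      set sw : (Fin M × Bool × Fin k) ≃ (Fin M × Bool × Fin k) := hinv.toPerm with hsw
      have hmpsw : MeasurePreserving
          (MeasurableEquiv.piCongrLeft (fun _ : Fin M × Bool × Fin k => I) sw) ρ ρ :=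
        measurePreserving_piCongrLeft (fun _ => (volume : Measure I)) sw
      have hpre : (MeasurableEquiv.piCongrLeft (fun _ : Fin M × Bool × Fin k => I) sw).symm ⁻¹'
          (T fun _ => false) = T ε := by
        ext y
        simp only [T, Set.mem_preimage, Set.mem_setOf_eq]
        constructor <;> intro h j <;> have := h j <;>
          simpa [MeasurableEquiv.piCongrLeft, Equiv.piCongrLeft_symm_apply, sw,
            Function.Involutive.toPerm, Bool.xor_false, Bool.xor_true] using this
      calc ρ (T ε)
          = ρ ((MeasurableEquiv.piCongrLeft (fun _ : Fin M × Bool × Fin k => I) sw).symm ⁻¹'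
            (T fun _ => false)) := by rw [hpre]
        _ = ρ (T fun _ => false) :=
            (MeasurePreserving.symm _ hmpsw).measure_preimage (hTm _).nullMeasurableSet
    -- the T ε are pairwise disjoint
    have hdisj : Pairwise (Function.onFun Disjoint T) := by
      intro ε ε' hne
      rw [Function.onFun, Set.disjoint_left]
      intro y hy hy'
      obtain ⟨j, hj⟩ : ∃ j, ε j ≠ ε' j := by
        by_contra hc
        push_neg at hc
        exact hne (funext hc)
      have h1 := hy j
      have h2 := hy' j
      have hb : ε' j = !(ε j) := by cases h : ε j <;> cases h' : ε' j <;> simp_all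
      rw [hb, Bool.not_not] at h2
      exact lt_asymm h1 h2
    -- total measure bound
    have hρuniv : ρ Set.univ = 1 := by
      rw [← hmap, Measure.map_apply hrm MeasurableSet.univ]
      simp
    have hsum : (2 ^ M : ℝ≥0∞) * ρ (T fun _ => false) ≤ 1 := by
      have hU : ρ (⋃ ε, T ε) = ∑' ε, ρ (T ε) := measure_iUnion hdisj hTm
      have : ∑' ε : Fin M → Bool, ρ (T ε) = (2 ^ M : ℝ≥0∞) * ρ (T fun _ => false) := by
        rw [tsum_fintype]
        have : ∀ ε, ρ (T ε) = ρ (T fun _ => false) := hTmeas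
        rw [Finset.sum_congr rfl fun ε _ => this ε, Finset.sum_const, nsmul_eq_mul]
        congr 1
        simp [Finset.card_univ]
      calc (2 ^ M : ℝ≥0∞) * ρ (T fun _ => false) = ρ (⋃ ε, T ε) := by rw [hU, this]
        _ ≤ ρ Set.univ := measure_mono (Set.subset_univ _)
        _ = 1 := hρuniv
    have hTle : ρ (T fun _ => false) ≤ ((2 : ℝ≥0∞)⁻¹) ^ M := by
      rw [← ENNReal.inv_pow]
      rw [ENNReal.le_inv_iff_mul_le, mul_comm]
      exact hsum
    -- E is contained in the preimage of T (const false)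
    have hsub : E ⊆ r ⁻¹' (T fun _ => false) := by
      intro x hx
      have hF : StrictAnti (fun n => f (fun i : Fin k => x (n + i.1))) :=
        strictAnti_nat_of_succ_lt fun n => hx n
      intro j
      have hlt : 2 * k * j.1 < 2 * k * j.1 + k := Nat.lt_add_of_pos_right (by omega)
      have := hF hlt
      have e1 : (fun i : Fin k => r x (j, false, i)) =
          fun i : Fin k => x (2 * k * j.1 + i.1) := by
        funext i
        exact congrArg x (by simp [enc]; ring)
      have e2 : (fun i : Fin k => r x (j, true, i)) =
          fun i : Fin k => x ((2 * k * j.1 + k) + i.1) := by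
        funext i
        exact congrArg x (by simp [enc]; ring)
      show f (fun i => r x (j, !(false : Bool), i)) < f (fun i => r x (j, false, i))
      simpa [e1, e2] using this
    calc μ E ≤ μ (r ⁻¹' (T fun _ => false)) := measure_mono hsub
      _ = ρ (T fun _ => false) := by rw [← hmap, Measure.map_apply hrm (hTm _)]
      _ ≤ ((2 : ℝ≥0∞)⁻¹) ^ M := hTle
  have htend : Filter.Tendsto (fun M : ℕ => ((2 : ℝ≥0∞)⁻¹) ^ M) Filter.atTop (nhds 0) :=
    ENNReal.tendsto_pow_atTop_nhds_zero_of_lt_one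
      (by rw [ENNReal.inv_lt_one]; exact one_lt_two)
  exact ge_of_tendsto' htend key
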